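/- Let R = k[x_1,...,x_d] with k a field of characteristic 0. If I ⊆ R is a monomial ideal and n a positive integer, then the n-th differential power I^⟨n⟩ is also a monomial ideal; that is, whenever a polynomial f = Σ c_i x^{α_i} (with distinct exponent tuples α_i and nonzero coefficients c_i) lies in I^⟨n⟩, each monomial x^{α_i} lies in I^⟨n⟩. -/

import Mathlib

/-- `IsDiffOp A n φ` says that the `A`-linear endomorphism `φ` of `R` is an
`A`-linear differential operator of order at most `n`. -/
def IsDiffOp (A : Type*) {R : Type*} [CommRing A] [CommRing R] [Algebra A R] :
    ℕ → (R →ₗ[A] R) → Prop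
  | 0 => fun φ => ∃ r : R, φ = LinearMap.mulLeft A r
  | n + 1 => fun φ => ∀ a : R,
      IsDiffOp A n (φ ∘ₗ LinearMap.mulLeft A a - LinearMap.mulLeft A a ∘ₗ φ)

theorem isDiffOp_comp_mulLeft (A : Type*) {R : Type*} [CommRing A] [CommRing R]
    [Algebra A R] (x : R) (n : ℕ) :
    ∀ φ : R →ₗ[A] R, IsDiffOp A n φ → IsDiffOp A n (φ ∘ₗ LinearMap.mulLeft A x) := by
  induction n with
  | zero =>
    rintro φ ⟨r, rfl⟩
    exact ⟨r * x, by ext y; simp [mul_assoc]⟩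
  | succ n ih =>
    intro φ h a
    have h2 := ih _ (h a)
    have key : (φ ∘ₗ LinearMap.mulLeft A x) ∘ₗ LinearMap.mulLeft A a -
        LinearMap.mulLeft A a ∘ₗ (φ ∘ₗ LinearMap.mulLeft A x) =
        (φ ∘ₗ LinearMap.mulLeft A a - LinearMap.mulLeft A a ∘ₗ φ) ∘ₗ LinearMap.mulLeft A x := by
      ext y
      simp [mul_left_comm]
    rw [key]
    exact h2

/-- The `n`-th differential power of an ideal `I` of the `A`-algebra `R`:
the set of `r ∈ R` such that `∂ r ∈ I` for every `A`-linear differential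
operator `∂` of order at most `n - 1`. -/
def diffPow (A : Type*) {R : Type*} [CommRing A] [CommRing R] [Algebra A R]
    (n : ℕ) (I : Ideal R) : Ideal R where
  carrier := {r | ∀ φ : R →ₗ[A] R, IsDiffOp A (n - 1) φ → φ r ∈ I}
  add_mem' := fun hx hy φ hφ => by simp [map_add]; exact I.add_mem (hx φ hφ) (hy φ hφ)
  zero_mem' := fun φ _ => by simpa using I.zero_mem
  smul_mem' := fun c x hx => by
    intro φ hφ
    have := hx (φ ∘ₗ LinearMap.mulLeft A c) (isDiffOp_comp_mulLeft A c _ φ hφ)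
    simpa [smul_eq_mul] using this

/-- An ideal of a polynomial ring is a monomial ideal if it is generated by monomials. -/
def IsMonomialIdeal {k : Type*} [Field k] {d : ℕ}
    (I : Ideal (MvPolynomial (Fin d) k)) : Prop :=
  ∃ S : Set (Fin d →₀ ℕ),
    I = Ideal.span ((fun s => (MvPolynomial.monomial s (1 : k))) '' S)

/-!
The Euler-type operators `θᵢ = xᵢ ∂ᵢ` are derivations, and commuting a differential operator
with a derivation does not raise its order; so a derivation preserving `I` also preserves
`I^⟨n⟩`. A monomial ideal is preserved by every `θᵢ`, and `θᵢ` acts on `x^u` by the scalar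
`uᵢ`. In characteristic `0` the operator `θᵢ - tᵢ` therefore kills the monomial `x^t` of `f`
while keeping every monomial `x^s` with `sᵢ ≠ tᵢ`; iterating isolates each monomial of `f`
inside `I^⟨n⟩`.
-/

open MvPolynomial

section DifferentialOperators

variable {A R : Type*} [CommRing A] [CommRing R] [Algebra A R]

theorem IsDiffOp.add {n : ℕ} {φ ψ : R →ₗ[A] R} (hφ : IsDiffOp A n φ) (hψ : IsDiffOp A n ψ) :
    IsDiffOp A n (φ + ψ) := by
  induction n generalizing φ ψ with
  | zero =>
    obtain ⟨r, rfl⟩ := hφ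
    obtain ⟨r', rfl⟩ := hψ
    exact ⟨r + r', by ext; simp [add_mul]⟩
  | succ n ih =>
    intro a
    have hsplit : (φ + ψ) ∘ₗ LinearMap.mulLeft A a - LinearMap.mulLeft A a ∘ₗ (φ + ψ) =
        (φ ∘ₗ LinearMap.mulLeft A a - LinearMap.mulLeft A a ∘ₗ φ) +
        (ψ ∘ₗ LinearMap.mulLeft A a - LinearMap.mulLeft A a ∘ₗ ψ) := by
      ext y
      simp only [LinearMap.sub_apply, LinearMap.add_apply, LinearMap.comp_apply,
        LinearMap.mulLeft_apply]
      ring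
    rw [hsplit]
    exact ih (hφ a) (hψ a)

theorem IsDiffOp.comp_derivation_sub_derivation_comp {n : ℕ} {φ : R →ₗ[A] R}
    (hφ : IsDiffOp A n φ) (D : Derivation A R R) :
    IsDiffOp A n (φ ∘ₗ D.toLinearMap - D.toLinearMap ∘ₗ φ) := by
  induction n generalizing φ with
  | zero =>
    obtain ⟨r, rfl⟩ := hφ
    exact ⟨-D r, by ext; simp [Derivation.leibniz, mul_comm]⟩
  | succ n ih =>
    intro a
    -- Jacobi identity, with `[D, a] = D a` as multiplication operators
    have jacobi : (φ ∘ₗ D.toLinearMap - D.toLinearMap ∘ₗ φ) ∘ₗ LinearMap.mulLeft A a -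
          LinearMap.mulLeft A a ∘ₗ (φ ∘ₗ D.toLinearMap - D.toLinearMap ∘ₗ φ) =
        ((φ ∘ₗ LinearMap.mulLeft A a - LinearMap.mulLeft A a ∘ₗ φ) ∘ₗ D.toLinearMap -
          D.toLinearMap ∘ₗ (φ ∘ₗ LinearMap.mulLeft A a - LinearMap.mulLeft A a ∘ₗ φ)) +
        (φ ∘ₗ LinearMap.mulLeft A (D a) - LinearMap.mulLeft A (D a) ∘ₗ φ) := by
      ext y
      simp only [LinearMap.sub_apply, LinearMap.add_apply, LinearMap.comp_apply,
        LinearMap.mulLeft_apply, Derivation.coeFn_coe, Derivation.leibniz, smul_eq_mul,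
        map_add, map_sub, mul_comm y (D a)]
      ring
    rw [jacobi]
    exact (ih (hφ a)).add (hφ (D a))

theorem Derivation.map_mem_diffPow {I : Ideal R} (D : Derivation A R R)
    (hD : ∀ x ∈ I, D x ∈ I) {n : ℕ} {f : R} (hf : f ∈ diffPow A n I) :
    D f ∈ diffPow A n I := by
  intro φ hφ
  have hsplit : φ (D f) = (φ ∘ₗ D.toLinearMap - D.toLinearMap ∘ₗ φ) f + D (φ f) := by simp
  rw [hsplit]
  exact I.add_mem (hf _ (hφ.comp_derivation_sub_derivation_comp D)) (hD _ (hf φ hφ))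

theorem Derivation.map_mem_span {S : Set R} (D : Derivation A R R)
    (hS : ∀ s ∈ S, D s ∈ Ideal.span S) {x : R} (hx : x ∈ Ideal.span S) :
    D x ∈ Ideal.span S := by
  induction hx using Submodule.span_induction with
  | mem s hs => exact hS s hs
  | zero => simp
  | add x y _ _ hx hy => rw [map_add]; exact Ideal.add_mem _ hx hy
  | smul a x hx hDx =>
    rw [smul_eq_mul, Derivation.leibniz, smul_eq_mul, smul_eq_mul]
    exact Ideal.add_mem _ (Ideal.mul_mem_left _ _ hDx) (Ideal.mul_mem_right _ _ hx)

end DifferentialOperators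

namespace MvPolynomial

variable {σ k : Type*}

noncomputable def theta [CommSemiring k] (i : σ) :
    Derivation k (MvPolynomial σ k) (MvPolynomial σ k) :=
  (X i : MvPolynomial σ k) • pderiv i

section CommSemiring

variable [CommSemiring k]

theorem theta_monomial (i : σ) (s : σ →₀ ℕ) (a : k) :
    theta i (monomial s a) = s i • monomial s a := by
  rw [theta, Derivation.smul_apply, smul_eq_mul, X_mul_pderiv_monomial]

theorem coeff_theta (i : σ) (f : MvPolynomial σ k) (u : σ →₀ ℕ) :
    coeff u (theta i f) = u i * coeff u f := by
  classical
  induction f using MvPolynomial.induction_on' with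
  | monomial s a =>
    rw [theta_monomial, coeff_smul, coeff_monomial, nsmul_eq_mul]
    split_ifs with h <;> simp [h]
  | add p q hp hq => simp only [map_add, coeff_add, hp, hq, mul_add]

end CommSemiring

section Field

variable [Field k]

theorem support_theta_sub_smul [DecidableEq k] (i : σ) (c : k) (f : MvPolynomial σ k) :
    (theta i f - c • f).support = f.support.filter fun u => (u i : k) ≠ c := by
  ext u
  simp [coeff_theta, ← sub_mul, sub_eq_zero, and_comm]

theorem theta_mem_of_isMonomialIdeal {d : ℕ} {I : Ideal (MvPolynomial (Fin d) k)}
    (hI : IsMonomialIdeal I) (i : Fin d) {f : MvPolynomial (Fin d) k} (hf : f ∈ I) :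
    theta i f ∈ I := by
  obtain ⟨S, rfl⟩ := hI
  refine (theta i).map_mem_span ?_ hf
  rintro _ ⟨s, hs, rfl⟩
  rw [theta_monomial]
  exact Submodule.smul_of_tower_mem _ _ (Ideal.subset_span ⟨s, hs, rfl⟩)

theorem monomial_mem_of_forall_theta_mem [CharZero k] {J : Ideal (MvPolynomial σ k)}
    (hJ : ∀ i, ∀ f ∈ J, theta i f ∈ J) {f : MvPolynomial σ k} (hf : f ∈ J) {s : σ →₀ ℕ}
    (hs : s ∈ f.support) : monomial s 1 ∈ J := by
  classical
  induction hcard : f.support.card using Nat.strong_induction_on generalizing f with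
  | _ N ih =>
    by_cases hsingle : f.support = {s}
    · have hcoeff : coeff s f ≠ 0 := mem_support_iff.mp hs
      have hf_eq : f = monomial s (coeff s f) := by
        conv_lhs => rw [f.as_sum, hsingle, Finset.sum_singleton]
      have : monomial s (1 : k) = C (coeff s f)⁻¹ * f := by
        rw [hf_eq, C_mul_monomial, coeff_monomial, if_pos rfl, inv_mul_cancel₀ hcoeff]
      rw [this]
      exact J.mul_mem_left _ hf
    obtain ⟨t, ht, hts⟩ : ∃ t ∈ f.support, t ≠ s := by
      by_contra! h
      exact hsingle (Finset.eq_singleton_iff_unique_mem.mpr ⟨hs, h⟩)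
    obtain ⟨i, hi⟩ := Finsupp.ne_iff.mp hts
    set g := theta i f - (t i : k) • f
    have hg : g ∈ J := J.sub_mem (hJ i f hf) (Submodule.smul_of_tower_mem _ _ hf)
    have hsupp : g.support ⊂ f.support := by
      rw [support_theta_sub_smul]
      exact Finset.filter_ssubset.mpr ⟨t, ht, by simp⟩
    have hsg : s ∈ g.support := by
      rw [support_theta_sub_smul, Finset.mem_filter, Ne, Nat.cast_inj]
      exact ⟨hs, fun h => hi h.symm⟩
    exact ih _ (hcard ▸ Finset.card_lt_card hsupp) hg hsg rfl

theorem isMonomialIdeal_of_forall_monomial_mem {d : ℕ} {J : Ideal (MvPolynomial (Fin d) k)}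
    (hJ : ∀ f ∈ J, ∀ s ∈ f.support, monomial s 1 ∈ J) : IsMonomialIdeal J := by
  refine ⟨{s | monomial s 1 ∈ J}, le_antisymm (fun f hf => ?_) ?_⟩
  · exact mem_ideal_span_monomial_image.mpr fun s hs => ⟨s, hJ f hf s hs, le_rfl⟩
  · rw [Ideal.span_le]
    rintro _ ⟨s, hs, rfl⟩
    exact hs

end Field

end MvPolynomial

theorem diffPow_isMonomialIdeal_general {k : Type*} [Field k] [CharZero k] {d : ℕ}
    (I : Ideal (MvPolynomial (Fin d) k)) (hI : IsMonomialIdeal I)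
    (n : ℕ) :
    IsMonomialIdeal (diffPow k n I) ∧
      ∀ f ∈ diffPow k n I, ∀ s ∈ f.support,
        (MvPolynomial.monomial s (1 : k)) ∈ diffPow k n I := by
  have htheta : ∀ i, ∀ f ∈ diffPow k n I, theta i f ∈ diffPow k n I := fun i _ hf =>
    (theta i).map_mem_diffPow (fun _ => theta_mem_of_isMonomialIdeal hI i) hf
  have hmonomial : ∀ f ∈ diffPow k n I, ∀ s ∈ f.support, monomial s (1 : k) ∈ diffPow k n I :=
    fun _ hf _ hs => monomial_mem_of_forall_theta_mem htheta hf hs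
  exact ⟨isMonomialIdeal_of_forall_monomial_mem hmonomial, hmonomial⟩

/-- Differential powers of monomial ideals are monomial ideals: moreover every
monomial appearing in an element of `I^⟨n⟩` again lies in `I^⟨n⟩`. -/
theorem diffPow_isMonomialIdeal {k : Type*} [Field k] [CharZero k] {d : ℕ}
    (I : Ideal (MvPolynomial (Fin d) k)) (hI : IsMonomialIdeal I)
    (n : ℕ) (hn : 0 < n) :
    IsMonomialIdeal (diffPow k n I) ∧
      ∀ f ∈ diffPow k n I, ∀ s ∈ f.support,
        (MvPolynomial.monomial s (1 : k)) ∈ diffPow k n I :=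
  diffPow_isMonomialIdeal_general I hI n
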